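/- arXiv:1512.02990 — 2 statements merged into one kernel-verified Lean document; each statement's English description precedes it below -/
import Mathlib

section
/- Let V_I be a d×d invertible matrix over GF(q) and let M be the d×α Staircase matrix with blocks S (α×k on top-left over R_1 which is z×k), and right column [D; R_2; 0] where D is the transpose of the last α−k rows of [S; R_1], R_2 is z×(α−k), and 0 is (α−k)×(α−k), with α = d−z and t = k+z ≤ d. Then from the t rows of V·M indexed by any set I of size t, one can uniquely recover S. -/
open scoped Matrix


/-- The vertical stack [S; R1] of the secret matrix S ((d−z)×k) over the key
matrix R1 (z×k), as a d×k matrix. -/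
def stackT {F : Type*} [Field F] (k z d : ℕ)
    (S : Matrix (Fin (d - z)) (Fin k) F) (R1 : Matrix (Fin z) (Fin k) F)
    (i : Fin d) (j : Fin k) : F :=
  if hi : (i : ℕ) < d - z then S ⟨i, hi⟩ j
  else if hi2 : (i : ℕ) - (d - z) < z then R1 ⟨(i : ℕ) - (d - z), hi2⟩ j
  else 0

/-- The d×α Staircase matrix M (α = d−z): left block [S; R1] (d×k), right
block [D; R2; 0] where D is the transpose of the last α−k rows of [S; R1],
R2 is z×(α−k) and 0 is (α−k)×(α−k). -/
def stairM {F : Type*} [Field F] (k z d : ℕ)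
    (S : Matrix (Fin (d - z)) (Fin k) F) (R1 : Matrix (Fin z) (Fin k) F)
    (R2 : Matrix (Fin z) (Fin (d - z - k)) F)
    (i : Fin d) (j : Fin (d - z)) : F :=
  if hj : (j : ℕ) < k then stackT k z d S R1 i ⟨j, hj⟩
  else if hi : (i : ℕ) < k then
    -- D entry: transpose of last α−k rows of [S; R1]; row index z + j
    if hrow : z + (j : ℕ) < d then stackT k z d S R1 ⟨z + (j : ℕ), hrow⟩ ⟨(i : ℕ), hi⟩
    else 0
  else if hi2 : (i : ℕ) - k < z then
    R2 ⟨(i : ℕ) - k, hi2⟩ ⟨(j : ℕ) - k, by have := j.isLt; omega⟩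
  else 0


lemma vand_zero {F : Type*} [Field F] {t : ℕ} (pts : Fin t → F)
    (hpts : Function.Injective pts) (c : Fin t → F)
    (h : ∀ i, ∑ l : Fin t, c l * pts i ^ (l : ℕ) = 0) : c = 0 := by
  have hdet : (Matrix.vandermonde pts).det ≠ 0 :=
    Matrix.det_vandermonde_ne_zero_iff.2 hpts
  have hmv : Matrix.vandermonde pts *ᵥ c = 0 := by
    funext i
    simpa [Matrix.mulVec, Matrix.vandermonde, dotProduct, mul_comm] using h i
  calc c = ((Matrix.vandermonde pts)⁻¹ * Matrix.vandermonde pts) *ᵥ c := by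
        rw [Matrix.nonsing_inv_mul _ hdet.isUnit, Matrix.one_mulVec]
    _ = (Matrix.vandermonde pts)⁻¹ *ᵥ (Matrix.vandermonde pts *ᵥ c) := by
        rw [← Matrix.mulVec_mulVec]
    _ = 0 := by rw [hmv, Matrix.mulVec_zero]

lemma poly_zero {F : Type*} [Field F] {t d : ℕ} (htd : t ≤ d)
    (pts : Fin t → F) (hpts : Function.Injective pts)
    (c : Fin d → F) (hc : ∀ l : Fin d, t ≤ (l : ℕ) → c l = 0)
    (h : ∀ i, ∑ l : Fin d, c l * pts i ^ (l : ℕ) = 0) : ∀ l, c l = 0 := by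
  have key : (fun l : Fin t => c (Fin.castLE htd l)) = 0 := by
    apply vand_zero pts hpts
    intro i
    rw [← h i]
    have hf : ∀ m : ℕ, ∀ _ : m < d, True := fun _ _ => trivial
    set f : ℕ → F := fun m => if hm : m < d then c ⟨m, hm⟩ * pts i ^ m else 0 with hfdef
    have h1 : ∑ l : Fin t, c (Fin.castLE htd l) * pts i ^ (l : ℕ) = ∑ m ∈ Finset.range t, f m := by
      rw [← Fin.sum_univ_eq_sum_range]
      refine Finset.sum_congr rfl fun l _ => ?_
      have : ((l : ℕ) < d) := lt_of_lt_of_le l.isLt htd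
      simp [hfdef, this, Fin.castLE]
    have h2 : ∑ l : Fin d, c l * pts i ^ (l : ℕ) = ∑ m ∈ Finset.range d, f m := by
      rw [← Fin.sum_univ_eq_sum_range]
      refine Finset.sum_congr rfl fun l _ => ?_
      simp [hfdef, l.isLt]
    rw [h1, h2]
    apply Finset.sum_subset (Finset.range_subset_range.2 htd)
    intro m hm hmt
    simp only [Finset.mem_range] at hm hmt
    simp [hfdef, hm, hc ⟨m, hm⟩ (le_of_not_gt hmt)]
  intro l
  by_cases hl : (l : ℕ) < t
  · have := congrFun key ⟨l, hl⟩
    simpa [Fin.castLE] using this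
  · exact hc l (le_of_not_gt hl)
/-- MDS property of the Staircase code: from any t = k+z rows of V·M (V an
n×d Vandermonde matrix over GF(q), q > n, with distinct points), the secret S
is uniquely recoverable. -/
theorem stmt9 {F : Type*} [Field F] [Fintype F] (n k z d : ℕ)
    (hk : 0 < k) (hz : 0 < z) (hd : k + z ≤ d) (hdn : d ≤ n)
    (hq : n < Fintype.card F)
    (x : Fin n → F) (hx : Function.Injective x)
    (I : Fin (k + z) → Fin n) (hI : Function.Injective I)
    (S S' : Matrix (Fin (d - z)) (Fin k) F)
    (R1 R1' : Matrix (Fin z) (Fin k) F)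
    (R2 R2' : Matrix (Fin z) (Fin (d - z - k)) F)
    (hobs : ∀ (i : Fin (k + z)) (j : Fin (d - z)),
      ∑ l : Fin d, x (I i) ^ (l : ℕ) * stairM k z d S R1 R2 l j =
      ∑ l : Fin d, x (I i) ^ (l : ℕ) * stairM k z d S' R1' R2' l j) :
    S = S' := by
  set pts : Fin (k + z) → F := fun i => x (I i) with hptsdef
  have hpts : Function.Injective pts := fun a b hab => hI (hx hab)
  have hcol : ∀ (j : Fin (d - z)),
      (∀ l' : Fin d, k + z ≤ (l' : ℕ) →
        stairM k z d S R1 R2 l' j = stairM k z d S' R1' R2' l' j) →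
      ∀ l : Fin d, stairM k z d S R1 R2 l j = stairM k z d S' R1' R2' l j := by
    intro j hzero l
    have h := poly_zero hd pts hpts
      (fun l => stairM k z d S R1 R2 l j - stairM k z d S' R1' R2' l j)
      (fun l' hl' => sub_eq_zero.2 (hzero l' hl'))
      (fun i => by
        simp only [sub_mul]
        rw [Finset.sum_sub_distrib, sub_eq_zero]
        simpa [mul_comm] using (hobs i j))
    exact sub_eq_zero.1 (h l)
  -- Step 1: the stack [S; R1] agrees on rows ≥ z + k (recovered from D).
  have hstack : ∀ (l : Fin d) (c0 : Fin k), k + z ≤ (l : ℕ) + z - z → z + k ≤ (l : ℕ) →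
      stackT k z d S R1 l c0 = stackT k z d S' R1' l c0 := by
    intro l c0 _ hl
    have hld := l.isLt
    have hjlt : (l : ℕ) - z < d - z := by omega
    have hz0 : ∀ l' : Fin d, k + z ≤ (l' : ℕ) →
        stairM k z d S R1 R2 l' ⟨(l : ℕ) - z, hjlt⟩ =
        stairM k z d S' R1' R2' l' ⟨(l : ℕ) - z, hjlt⟩ := by
      intro l' hl'
      simp only [stairM, stackT, Fin.val_mk]
      split_ifs <;> first | rfl | omega
    have hc0d : (c0 : ℕ) < d := by have := c0.isLt; omega
    have key := hcol ⟨(l : ℕ) - z, hjlt⟩ hz0 ⟨(c0 : ℕ), hc0d⟩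
    simp only [stairM, stackT, Fin.val_mk] at key
    split_ifs at key <;> simp only [stackT] <;> split_ifs <;>
      first
        | omega
        | (convert key using 2 <;> simp [Fin.ext_iff] <;> omega)
  -- Step 2: from the left columns, recover S entirely.
  ext r c0
  have hc0d : (c0 : ℕ) < d - z := lt_of_lt_of_le c0.isLt (by omega)
  have hz0 : ∀ l' : Fin d, k + z ≤ (l' : ℕ) →
      stairM k z d S R1 R2 l' ⟨(c0 : ℕ), hc0d⟩ =
      stairM k z d S' R1' R2' l' ⟨(c0 : ℕ), hc0d⟩ := by
    intro l' hl'
    simp only [stairM, Fin.val_mk]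
    split_ifs with h1
    case pos => exact hstack l' ⟨(c0 : ℕ), h1⟩ (by omega) (by omega)
    all_goals exact absurd c0.isLt h1
  have hrd : (r : ℕ) < d := lt_of_lt_of_le r.isLt (by omega)
  have key := hcol ⟨(c0 : ℕ), hc0d⟩ hz0 ⟨(r : ℕ), hrd⟩
  simp only [stairM, stackT, Fin.val_mk] at key
  split_ifs at key <;> first | omega | (exact absurd r.isLt (by assumption)) |
    (convert key using 2 <;> simp [Fin.ext_iff])
end

section
/- If a secret sharing scheme on n unit-size shares satisfies perfect secrecy against z parties (H(S | W_Z) = H(S) for all |Z| = z) and the MDS property (H(S | W_A) = 0 for all |A| = t), then H(S) ≤ t − z units. -/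
/-!
Pick a set `T` of `t` shares and a subset `Z ⊆ T` of `z` of them. Secrecy gives
`H(S) = H(S, W_Z) - H(W_Z)`; since `(S, W_Z)` is a function of `(S, W_T)` and the MDS property
says `H(S, W_T) = H(W_T)`, this is at most `H(W_T) - H(W_Z)`. Finally `W_T` is a function of
`(W_Z, W_{T \ Z})`, and the `t - z` shares of `W_{T \ Z}` carry at most `log |A|` each.
-/

/-- Shannon entropy (natural log) of a random variable `X` on a finite
probability space with weights `μ`. -/
noncomputable def shannonEntropy {Ω γ : Type*} [Fintype Ω] [Fintype γ] [DecidableEq γ]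
    (μ : Ω → ℝ) (X : Ω → γ) : ℝ :=
  ∑ c : γ, Real.negMulLog (∑ ω ∈ Finset.univ.filter (fun ω => X ω = c), μ ω)

open Finset Real

namespace Real

lemma mul_log_le_mul_log_add {a b : ℝ} (ha : 0 ≤ a) (hb : 0 ≤ b) :
    a * log a ≤ a * log (a + b) := by
  rcases ha.eq_or_lt with rfl | ha
  · simp
  · exact mul_le_mul_of_nonneg_left (log_le_log ha (by linarith)) ha.le

lemma negMulLog_add_le {a b : ℝ} (ha : 0 ≤ a) (hb : 0 ≤ b) :
    negMulLog (a + b) ≤ negMulLog a + negMulLog b := by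
  have hab := mul_log_le_mul_log_add ha hb
  have hba := mul_log_le_mul_log_add hb ha
  rw [add_comm b] at hba
  simp only [negMulLog, neg_mul]
  linarith [add_mul a b (log (a + b))]

lemma negMulLog_sum_le {ι : Type*} (s : Finset ι) {f : ι → ℝ} (hf : ∀ i ∈ s, 0 ≤ f i) :
    negMulLog (∑ i ∈ s, f i) ≤ ∑ i ∈ s, negMulLog (f i) := by
  induction s using Finset.cons_induction with
  | empty => simp
  | cons a s _ ih =>
    rw [sum_cons, sum_cons]
    have hs := fun i hi => hf i (mem_cons_of_mem hi)
    exact (negMulLog_add_le (hf a (mem_cons_self a s)) (sum_nonneg hs)).trans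
      (add_le_add_right (ih hs) _)

-- Jensen's inequality for the concave `negMulLog`, with uniform weights `1 / #s`.
lemma sum_negMulLog_le {ι : Type*} (s : Finset ι) {f : ι → ℝ} (hf : ∀ i ∈ s, 0 ≤ f i) :
    ∑ i ∈ s, negMulLog (f i) ≤ negMulLog (∑ i ∈ s, f i) + (∑ i ∈ s, f i) * log #s := by
  rcases s.eq_empty_or_nonempty with rfl | hs
  · simp
  have hN : (0 : ℝ) < #s := by exact_mod_cast hs.card_pos
  have jensen := concaveOn_negMulLog.le_map_sum (t := s) (w := fun _ => (#s : ℝ)⁻¹) (p := f)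
    (fun _ _ => by positivity) (by simp [hN.ne']) (fun i hi => Set.mem_Ici.2 (hf i hi))
  have hinv : negMulLog (#s : ℝ)⁻¹ = (#s : ℝ)⁻¹ * log #s := by
    simp [negMulLog, log_inv]
  simp only [smul_eq_mul, ← mul_sum, negMulLog_mul, hinv] at jensen
  have := mul_le_mul_of_nonneg_left jensen hN.le
  field_simp at this
  linarith

end Real

section Entropy

variable {Ω γ δ : Type*} [Fintype Ω] [DecidableEq γ] [DecidableEq δ]

noncomputable def law (μ : Ω → ℝ) (X : Ω → γ) (c : γ) : ℝ :=
  ∑ ω ∈ univ.filter (fun ω => X ω = c), μ ω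

lemma shannonEntropy_eq_sum_law [Fintype γ] (μ : Ω → ℝ) (X : Ω → γ) :
    shannonEntropy μ X = ∑ c, negMulLog (law μ X c) := rfl

lemma law_nonneg {μ : Ω → ℝ} (hμ : ∀ ω, 0 ≤ μ ω) (X : Ω → γ) (c : γ) : 0 ≤ law μ X c :=
  sum_nonneg fun ω _ => hμ ω

lemma sum_law [Fintype γ] (μ : Ω → ℝ) (X : Ω → γ) : ∑ c, law μ X c = ∑ ω, μ ω :=
  sum_fiberwise univ X μ

lemma law_comp [Fintype γ] (μ : Ω → ℝ) (X : Ω → γ) (g : γ → δ) (d : δ) :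
    law μ (fun ω => g (X ω)) d = ∑ c ∈ univ.filter (fun c => g c = d), law μ X c := by
  unfold law
  rw [← sum_fiberwise_of_maps_to (g := X) (t := univ.filter (fun c => g c = d))
    (fun ω hω => by simpa using hω)]
  refine sum_congr rfl fun c hc => ?_
  rw [filter_filter]
  refine sum_congr (filter_congr fun ω _ => ?_) fun _ _ => rfl
  simp only [mem_filter] at hc
  constructor
  · exact And.right
  · rintro rfl; exact ⟨hc.2, rfl⟩

lemma sum_law_prod [Fintype δ] (μ : Ω → ℝ) (X : Ω → γ) (Y : Ω → δ) (c : γ) :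
    ∑ d, law μ (fun ω => (X ω, Y ω)) (c, d) = law μ X c := by
  unfold law
  rw [← sum_fiberwise (univ.filter (fun ω => X ω = c)) Y μ]
  refine sum_congr rfl fun d _ => ?_
  rw [filter_filter]
  refine sum_congr (filter_congr fun ω _ => ?_) fun _ _ => rfl
  simp [Prod.ext_iff]

lemma shannonEntropy_comp_le [Fintype γ] [Fintype δ] {μ : Ω → ℝ} (hμ : ∀ ω, 0 ≤ μ ω)
    (X : Ω → γ) (g : γ → δ) :
    shannonEntropy μ (fun ω => g (X ω)) ≤ shannonEntropy μ X :=
  calc shannonEntropy μ (fun ω => g (X ω))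
      = ∑ d, negMulLog (∑ c ∈ univ.filter (fun c => g c = d), law μ X c) := by
        simp only [shannonEntropy_eq_sum_law, law_comp]
    _ ≤ ∑ d, ∑ c ∈ univ.filter (fun c => g c = d), negMulLog (law μ X c) :=
        sum_le_sum fun d _ => negMulLog_sum_le _ fun c _ => law_nonneg hμ X c
    _ = shannonEntropy μ X := sum_fiberwise univ g _

lemma shannonEntropy_prod_le [Fintype γ] [Fintype δ] {μ : Ω → ℝ} (hμ : ∀ ω, 0 ≤ μ ω)
    (hμ1 : ∑ ω, μ ω = 1) (X : Ω → γ) (Y : Ω → δ) :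
    shannonEntropy μ (fun ω => (X ω, Y ω)) ≤ shannonEntropy μ X + log (Fintype.card δ) :=
  calc shannonEntropy μ (fun ω => (X ω, Y ω))
      = ∑ c, ∑ d, negMulLog (law μ (fun ω => (X ω, Y ω)) (c, d)) := Fintype.sum_prod_type _
    _ ≤ ∑ c, (negMulLog (law μ X c) + law μ X c * log (Fintype.card δ)) :=
        sum_le_sum fun c _ => by
          simpa only [sum_law_prod, card_univ] using
            sum_negMulLog_le (univ : Finset δ) fun d _ =>
              law_nonneg hμ (fun ω => (X ω, Y ω)) (c, d)
    _ = shannonEntropy μ X + log (Fintype.card δ) := by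
        rw [sum_add_distrib, ← sum_mul, sum_law, hμ1, one_mul, shannonEntropy_eq_sum_law]

end Entropy

section Shares

variable {Ω ι A B : Type*} [Fintype Ω] [DecidableEq ι] [Fintype A] [DecidableEq A]

lemma shannonEntropy_prod_shares_mono [Fintype B] [DecidableEq B] {μ : Ω → ℝ}
    (hμ : ∀ ω, 0 ≤ μ ω) (S : Ω → B) (W : ι → Ω → A) {Z T : Finset ι} (hZT : Z ⊆ T) :
    shannonEntropy μ (fun ω => (S ω, fun i : Z => W i.1 ω)) ≤
      shannonEntropy μ (fun ω => (S ω, fun i : T => W i.1 ω)) :=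
  shannonEntropy_comp_le hμ (fun ω => (S ω, fun i : T => W i.1 ω))
    fun p => (p.1, fun i : Z => p.2 ⟨i.1, hZT i.2⟩)

lemma shannonEntropy_shares_le_add {μ : Ω → ℝ} (hμ : ∀ ω, 0 ≤ μ ω)
    (hμ1 : ∑ ω, μ ω = 1) (W : ι → Ω → A) {Z T : Finset ι} :
    shannonEntropy μ (fun ω => fun i : T => W i.1 ω) ≤
      shannonEntropy μ (fun ω => fun i : Z => W i.1 ω) + #(T \ Z) * log (Fintype.card A) := by
  let join : (Z → A) × (↥(T \ Z) → A) → (T → A) := fun p i =>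
    if h : i.1 ∈ Z then p.1 ⟨i.1, h⟩ else p.2 ⟨i.1, mem_sdiff.2 ⟨i.2, h⟩⟩
  have hjoin : (fun ω => fun i : T => W i.1 ω) =
      fun ω => join ((fun i : Z => W i.1 ω), (fun i : ↥(T \ Z) => W i.1 ω)) := by
    funext ω i
    by_cases h : i.1 ∈ Z <;> simp [join, h]
  have hcard : log (Fintype.card (↥(T \ Z) → A)) = #(T \ Z) * log (Fintype.card A) := by
    rw [Fintype.card_fun, Fintype.card_coe, Nat.cast_pow, log_pow]
  rw [hjoin, ← hcard]
  exact (shannonEntropy_comp_le hμ _ join).trans (shannonEntropy_prod_le hμ hμ1 _ _)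

end Shares

/-- If a secret sharing scheme on n shares (each over alphabet A, i.e. of size
at most one unit = log |A|) satisfies perfect secrecy against z parties and the
MDS property for threshold t, then H(S) ≤ (t − z) units. -/
theorem stmt19 {Ω A B : Type*} [Fintype Ω] [Fintype A] [Fintype B]
    [DecidableEq A] [DecidableEq B]
    (n t z : ℕ) (hz : z < t) (ht : t ≤ n)
    (μ : Ω → ℝ) (hμ : ∀ ω, 0 ≤ μ ω) (hμ1 : ∑ ω, μ ω = 1)
    (S : Ω → B) (W : Fin n → Ω → A)
    (hsec : ∀ Z : Finset (Fin n), Z.card = z →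
      shannonEntropy μ (fun ω => (S ω, fun i : Z => W i.1 ω)) -
        shannonEntropy μ (fun ω => fun i : Z => W i.1 ω) = shannonEntropy μ S)
    (hmds : ∀ T : Finset (Fin n), T.card = t →
      shannonEntropy μ (fun ω => (S ω, fun i : T => W i.1 ω)) -
        shannonEntropy μ (fun ω => fun i : T => W i.1 ω) = 0) :
    shannonEntropy μ S ≤ ((t - z : ℕ) : ℝ) * Real.log (Fintype.card A) := by
  obtain ⟨T, -, hT⟩ := exists_subset_card_eq (s := (univ : Finset (Fin n)))
    (by simpa using ht)
  obtain ⟨Z, hZT, hZ⟩ := exists_subset_card_eq (hT ▸ hz.le : z ≤ #T)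
  have hsecrecy := hsec Z hZ
  have hrecovery := hmds T hT
  have hmono := shannonEntropy_prod_shares_mono hμ S W hZT
  have hgrowth := shannonEntropy_shares_le_add hμ hμ1 W (Z := Z) (T := T)
  rw [card_sdiff_of_subset hZT, hT, hZ] at hgrowth
  linarith
end
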